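/- arXiv:0802.1415 — 2 statements merged into one kernel-verified Lean document; each statement's English description precedes it below -/
import Mathlib

section
/- Let (L,·) be a loop with holomorph H(L). If H(L) is an automorphic inverse property loop (AIPL), then AUM(L) = {I} and H(L) is isomorphic to L. -/
/-- A loop: a set with a binary operation `*` and identity `1` such that
the equations `a * x = b` and `y * a = b` have unique solutions. -/
class Loop (L : Type*) extends Mul L, One L where
  one_mul : ∀ x : L, 1 * x = x
  mul_one : ∀ x : L, x * 1 = x
  mulLeft_exu : ∀ a b : L, ∃! x : L, a * x = b
  mulRight_exu : ∀ a b : L, ∃! y : L, y * a = b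

namespace Loop

variable {L : Type*} [Loop L]

/-- The right inverse `x^ρ` of `x`, the unique solution of `x * x^ρ = 1`. -/
noncomputable def rinv (x : L) : L := (mulLeft_exu x 1).exists.choose

/-- The left inverse `x^λ` of `x`, the unique solution of `x^λ * x = 1`. -/
noncomputable def linv (x : L) : L := (mulRight_exu x 1).exists.choose

theorem mul_rinv (x : L) : x * rinv x = 1 := (mulLeft_exu x 1).exists.choose_spec

theorem linv_mul (x : L) : linv x * x = 1 := (mulRight_exu x 1).exists.choose_spec

/-- Any automorphism of a loop fixes the identity element. -/
theorem aut_map_one (α : L ≃* L) : α 1 = 1 :=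
  (mulRight_exu (α 1) (α 1)).unique
    (by rw [← map_mul, Loop.one_mul]) (Loop.one_mul _)

end Loop

/-- An automorphic inverse property loop (AIPL): `(x·y)^ρ = x^ρ · y^ρ`. -/
def IsAIPL (L : Type*) [Loop L] : Prop :=
  ∀ x y : L, Loop.rinv (x * y) = Loop.rinv x * Loop.rinv y

/-- A cross inverse property loop (CIPL): `(x·y) · x^ρ = y`. -/
def IsCIPL (L : Type*) [Loop L] : Prop :=
  ∀ x y : L, (x * y) * Loop.rinv x = y

/-- An autotopism of a loop: a triple of bijections `(A, B, C)` with
`xA · yB = (x·y)C` for all `x, y`. -/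
def IsAutotopism {L : Type*} [Loop L] (A B C : L → L) : Prop :=
  Function.Bijective A ∧ Function.Bijective B ∧ Function.Bijective C ∧
    ∀ x y : L, A x * B y = C (x * y)

/-- The holomorph `H(L) = AUM(L) × L` of a loop `L`, with operation
`(α,x)∘(β,y) = (αβ, xβ·y)` (automorphisms act on the right, so
`αβ` is "first `α`, then `β`", i.e. `α.trans β`, and `xβ = β x`). -/
def Holomorph (L : Type*) [Loop L] : Type _ := (L ≃* L) × L

namespace Holomorph

variable {L : Type*} [Loop L]

instance : Mul (Holomorph L) := ⟨fun a b => (a.1.trans b.1, b.1 a.2 * b.2)⟩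

instance : One (Holomorph L) := ⟨(MulEquiv.refl L, 1)⟩

theorem mul_def (a b : Holomorph L) : a * b = (a.1.trans b.1, b.1 a.2 * b.2) := rfl

theorem one_def : (1 : Holomorph L) = (MulEquiv.refl L, (1 : L)) := rfl

noncomputable instance : Loop (Holomorph L) where
  one_mul a := by
    show ((MulEquiv.refl L).trans a.1, a.1 1 * a.2) = a
    have h1 : (MulEquiv.refl L).trans a.1 = a.1 := by ext t; rfl
    have h2 : a.1 (1 : L) * a.2 = a.2 := by rw [Loop.aut_map_one, Loop.one_mul]
    exact Prod.ext h1 h2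
  mul_one a := by
    show (a.1.trans (MulEquiv.refl L), (MulEquiv.refl L) a.2 * 1) = a
    have h1 : a.1.trans (MulEquiv.refl L) = a.1 := by ext t; rfl
    have h2 : (MulEquiv.refl L) a.2 * (1 : L) = a.2 := Loop.mul_one _
    exact Prod.ext h1 h2
  mulLeft_exu a b := by
    obtain ⟨y, hy, hyu⟩ := Loop.mulLeft_exu ((a.1.symm.trans b.1) a.2) b.2
    refine ⟨(a.1.symm.trans b.1, y), ?_, ?_⟩
    · show (a.1.trans (a.1.symm.trans b.1), (a.1.symm.trans b.1) a.2 * y) = b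
      have h1 : a.1.trans (a.1.symm.trans b.1) = b.1 := by
        ext t; simp [MulEquiv.trans_apply]
      exact Prod.ext h1 hy
    · intro c hc
      have h1 : a.1.trans c.1 = b.1 := congrArg Prod.fst hc
      have h2 : c.1 a.2 * c.2 = b.2 := congrArg Prod.snd hc
      have hc1 : c.1 = a.1.symm.trans b.1 := by
        ext t
        have h := congrArg (fun e : L ≃* L => e (a.1.symm t)) h1
        simpa [MulEquiv.trans_apply] using h
      have hc2 : c.2 = y := hyu c.2 (by rw [← hc1]; exact h2)
      exact Prod.ext hc1 hc2
  mulRight_exu a b := by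
    obtain ⟨w, hw, hwu⟩ := Loop.mulRight_exu a.2 b.2
    refine ⟨(b.1.trans a.1.symm, a.1.symm w), ?_, ?_⟩
    · show ((b.1.trans a.1.symm).trans a.1, a.1 (a.1.symm w) * a.2) = b
      have h1 : (b.1.trans a.1.symm).trans a.1 = b.1 := by
        ext t; simp [MulEquiv.trans_apply]
      have h2 : a.1 (a.1.symm w) * a.2 = b.2 := by
        rw [MulEquiv.apply_symm_apply]; exact hw
      exact Prod.ext h1 h2
    · intro c hc
      have h1 : c.1.trans a.1 = b.1 := congrArg Prod.fst hc
      have h2 : a.1 c.2 * a.2 = b.2 := congrArg Prod.snd hc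
      have hc1 : c.1 = b.1.trans a.1.symm := by
        ext t
        have h := congrArg (fun e : L ≃* L => a.1.symm (e t)) h1
        simpa [MulEquiv.trans_apply] using h
      have hc2 : c.2 = a.1.symm w := by
        have h := hwu (a.1 c.2) h2
        have h' := congrArg a.1.symm h
        simpa using h'
      exact Prod.ext hc1 hc2

end Holomorph

theorem Loop.rinv_one {L : Type*} [Loop L] : Loop.rinv (1 : L) = 1 :=
  (Loop.mulLeft_exu (1 : L) 1).unique (Loop.mul_rinv 1) (Loop.one_mul 1)

theorem Loop.rinv_injective {L : Type*} [Loop L] : Function.Injective (Loop.rinv (L := L)) := by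
  intro a b hab
  exact (Loop.mulRight_exu (Loop.rinv a) 1).unique (Loop.mul_rinv a)
    (by rw [hab]; exact Loop.mul_rinv b)

theorem Holomorph.rinv_eq {L : Type*} [Loop L] (a : Holomorph L) :
    Loop.rinv a = (a.1.symm, Loop.rinv (a.1.symm a.2)) := by
  refine (Loop.mulLeft_exu a 1).unique (Loop.mul_rinv a) ?_
  show (a.1.trans a.1.symm, a.1.symm a.2 * Loop.rinv (a.1.symm a.2)) = 1
  refine Prod.ext ?_ (Loop.mul_rinv _)
  ext t; simp

/-- if `H(L)` is an AIPL, then `AUM(L) = {I}` and `H(L) ≅ L`. -/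
theorem statement_4 {L : Type*} [Loop L] (h : IsAIPL (Holomorph L)) :
    (∀ α : L ≃* L, α = MulEquiv.refl L) ∧ Nonempty (Holomorph L ≃* L) := by
  have key : ∀ (γ : L ≃* L) (y : L), Loop.rinv (γ.symm y) = Loop.rinv y := by
    intro γ y
    have h2 := congrArg Prod.snd (h (γ, 1) (MulEquiv.refl L, y))
    rw [Holomorph.rinv_eq, Holomorph.rinv_eq (MulEquiv.refl L, y), Holomorph.rinv_eq (γ, 1)] at h2
    change Loop.rinv ((γ.trans (MulEquiv.refl L)).symm ((MulEquiv.refl L) 1 * y)) =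
      (MulEquiv.refl L).symm (Loop.rinv (γ.symm 1)) * Loop.rinv ((MulEquiv.refl L).symm y) at h2
    simp only [Holomorph.mul_def, Holomorph.rinv_eq, MulEquiv.refl_apply, MulEquiv.refl_symm,
      MulEquiv.symm_trans_apply, Loop.one_mul, Loop.aut_map_one, Loop.rinv_one] at h2
    exact h2
  have triv : ∀ α : L ≃* L, α = MulEquiv.refl L := by
    intro α
    ext y
    have h1 := key α.symm y
    simp only [MulEquiv.symm_symm] at h1
    have h3 := Loop.rinv_injective h1
    simpa using h3
  refine ⟨triv, ⟨?_⟩⟩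
  refine ⟨⟨fun a => a.2, fun x => (MulEquiv.refl L, x), ?_, fun x => rfl⟩, ?_⟩
  · intro a
    exact Prod.ext (triv a.1).symm rfl
  · intro a b
    show b.1 a.2 * b.2 = a.2 * b.2
    rw [triv b.1, MulEquiv.refl_apply]
end

section
/- Let (L,·) be a loop with holomorph H(L). Then H(L) is a cross inverse property loop (CIPL) if and only if AUM(L) is an abelian group and for all x, y ∈ L and all α, β ∈ AUM(L): x^λ(α⁻¹βα) · (yα · x) = y, where x^λ(α⁻¹βα) denotes the image of x^λ under the automorphism α⁻¹βα. -/
namespace Loop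

variable {L : Type*} [Loop L]

theorem rinv_eq {x z : L} (h : x * z = 1) : rinv x = z :=
  (mulLeft_exu x 1).unique (mul_rinv x) h

theorem linv_eq {x z : L} (h : z * x = 1) : linv x = z :=
  (mulRight_exu x 1).unique (linv_mul x) h

theorem rinv_linv (x : L) : rinv (linv x) = x := rinv_eq (linv_mul x)

theorem linv_rinv (x : L) : linv (rinv x) = x := linv_eq (mul_rinv x)

theorem cipl_iff_linv_form : IsCIPL L ↔ ∀ x y : L, linv x * (y * x) = y := by
  constructor
  · intro h
    have form2 : ∀ x y : L, x * (y * rinv x) = y := by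
      intro x y
      obtain ⟨z, hz, -⟩ := mulLeft_exu x y
      calc x * (y * rinv x) = x * ((x * z) * rinv x) := by rw [hz]
        _ = x * z := by rw [h]
        _ = y := hz
    intro x y
    have := form2 (linv x) y
    rwa [rinv_linv] at this
  · intro h
    have form2 : ∀ x y : L, (linv x * y) * x = y := by
      intro x y
      obtain ⟨z, hz, -⟩ := mulRight_exu x y
      calc (linv x * y) * x = (linv x * (z * x)) * x := by rw [hz]
        _ = z * x := by rw [h]
        _ = y := hz
    intro x y
    have := form2 (rinv x) y
    rwa [linv_rinv] at this

end Loop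

theorem Holomorph.linv_spec {L : Type*} [Loop L] (a : Holomorph L) :
    Loop.linv a = (a.1.symm, a.1.symm (Loop.linv a.2)) := by
  apply Loop.linv_eq
  show (a.1.symm.trans a.1, a.1 (a.1.symm (Loop.linv a.2)) * a.2)
      = (MulEquiv.refl L, (1 : L))
  refine Prod.ext ?_ ?_
  · ext t; simp [MulEquiv.trans_apply]
  · rw [MulEquiv.apply_symm_apply]; exact Loop.linv_mul _

/-- `H(L)` is a CIPL iff `AUM(L)` is abelian and
`x^λ(α⁻¹βα) · (yα · x) = y` for all `x, y ∈ L`, `α, β ∈ AUM(L)`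
(maps compose left to right, so `x^λ(α⁻¹βα) = α (β (α⁻¹ (x^λ)))`). -/
theorem statement_11 {L : Type*} [Loop L] :
    IsCIPL (Holomorph L) ↔
      (∀ α β : L ≃* L, α.trans β = β.trans α) ∧
      ∀ (x y : L) (α β : L ≃* L), α (β (α.symm (Loop.linv x))) * (α y * x) = y := by
  rw [Loop.cipl_iff_linv_form]
  have key : ∀ a b : Holomorph L,
      Loop.linv a * (b * a) =
        (a.1.symm.trans (b.1.trans a.1),
          a.1 (b.1 (a.1.symm (Loop.linv a.2))) * (a.1 b.2 * a.2)) := by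
    intro a b
    rw [Holomorph.linv_spec]
    refine Prod.ext rfl ?_
    show (b.1.trans a.1) (a.1.symm (Loop.linv a.2)) * (a.1 b.2 * a.2) = _
    rfl
  constructor
  · intro h
    have h' : ∀ a b : Holomorph L, Loop.linv a * (b * a) = b := h
    constructor
    · intro α β
      have h1 := congrArg Prod.fst (h' (α, (1 : L)) (β, (1 : L)))
      have h1 := (congrArg Prod.fst (key (α, (1 : L)) (β, (1 : L)))).symm.trans h1
      simp only at h1
      ext t
      have := congrArg (fun e : L ≃* L => e (α t)) h1
      simpa [MulEquiv.trans_apply] using this.symm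
    · intro x y α β
      have h2 := congrArg Prod.snd (h' (α, x) (β, y))
      have h2 := (congrArg Prod.snd (key (α, x) (β, y))).symm.trans h2
      simpa using h2
  · rintro ⟨hab, hcond⟩ a b
    rw [key]
    refine Prod.ext ?_ ?_
    · show a.1.symm.trans (b.1.trans a.1) = b.1
      rw [hab b.1 a.1]
      ext t; simp [MulEquiv.trans_apply]
    · exact hcond a.2 b.2 a.1 b.1
end
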